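/- For a unit vector n, define H_n(Q) = ψ₁(nn − I/3)(nn:Q) + ψ₂(−Q + nn·Q + Q·nn − (2/3)I(nn:Q)) on symmetric traceless matrices Q, where ψ₁, ψ₂ are real constants. Then H_n vanishes on the subspace Q_n^in = {np + pn : p ⊥ n} and maps every symmetric traceless Q into the orthogonal complement Q_n^out of Q_n^in. -/

import Mathlib

/-! With `N = nnᵀ` and `P = npᵀ + pnᵀ`, the conditions `n·n = 1` and `p·n = 0` give `NP = npᵀ`
and `PN = pnᵀ`, so `NP + PN = P`, while `tr P = 2 p·n = 0` and `N:P = tr (NP) = n·p = 0`.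
This makes every term of `H_n(P)` cancel. For the orthogonality, `P` is symmetric, so
`H_n(Q):P = tr (H_n(Q) P)`, and cyclicity of the trace moves `N` onto `P`:
`(NQ + QN - Q):P = tr (Q (NP + PN - P)) = 0`. -/

open Matrix

/-- Frobenius inner product of 3×3 matrices. -/
def frob (A B : Matrix (Fin 3) (Fin 3) ℝ) : ℝ := ∑ i, ∑ j, A i j * B i j

/-- `H_n(Q) = ψ₁(nn − I/3)(nn:Q) + ψ₂(−Q + nn·Q + Q·nn − (2/3)I(nn:Q))`. -/
noncomputable def Hn (ψ₁ ψ₂ : ℝ) (n : Fin 3 → ℝ)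
    (Q : Matrix (Fin 3) (Fin 3) ℝ) : Matrix (Fin 3) (Fin 3) ℝ :=
  (ψ₁ * frob (vecMulVec n n) Q) • (vecMulVec n n - (1 / 3 : ℝ) • (1 : Matrix (Fin 3) (Fin 3) ℝ)) +
  ψ₂ • (-Q + vecMulVec n n * Q + Q * vecMulVec n n -
    ((2 / 3 : ℝ) * frob (vecMulVec n n) Q) • (1 : Matrix (Fin 3) (Fin 3) ℝ))

section Projector

variable {m R : Type*} [CommRing R]

theorem transpose_vecMulVec_add_vecMulVec (n p : m → R) :
    (vecMulVec n p + vecMulVec p n)ᵀ = vecMulVec n p + vecMulVec p n := by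
  simp [add_comm]

variable [Fintype m] {n p : m → R}

theorem vecMulVec_self_mul_vecMulVec_add (hn : n ⬝ᵥ n = 1) (hp : p ⬝ᵥ n = 0) :
    vecMulVec n n * (vecMulVec n p + vecMulVec p n) = vecMulVec n p := by
  rw [Matrix.mul_add, vecMulVec_mul_vecMulVec, vecMulVec_mul_vecMulVec, hn, dotProduct_comm, hp]
  simp

theorem vecMulVec_add_mul_vecMulVec_self (hn : n ⬝ᵥ n = 1) (hp : p ⬝ᵥ n = 0) :
    (vecMulVec n p + vecMulVec p n) * vecMulVec n n = vecMulVec p n := by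
  rw [Matrix.add_mul, vecMulVec_mul_vecMulVec, vecMulVec_mul_vecMulVec, hn, hp]
  simp

theorem trace_vecMulVec_add_vecMulVec (hp : p ⬝ᵥ n = 0) :
    trace (vecMulVec n p + vecMulVec p n) = 0 := by
  simp [dotProduct_comm n p, hp]

end Projector

theorem frob_eq_trace_mul_transpose (A B : Matrix (Fin 3) (Fin 3) ℝ) :
    frob A B = trace (A * Bᵀ) := by
  simp [frob, trace, mul_apply]

theorem trace_Hn_mul (ψ₁ ψ₂ : ℝ) (n : Fin 3 → ℝ) (Q P : Matrix (Fin 3) (Fin 3) ℝ) :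
    trace (Hn ψ₁ ψ₂ n Q * P) =
      ψ₁ * frob (vecMulVec n n) Q * (trace (vecMulVec n n * P) - trace P / 3) +
      ψ₂ * (trace (Q * (vecMulVec n n * P + P * vecMulVec n n - P)) -
        2 / 3 * frob (vecMulVec n n) Q * trace P) := by
  simp only [Hn, Matrix.add_mul, Matrix.sub_mul, Matrix.neg_mul, Matrix.smul_mul, Matrix.one_mul,
    Matrix.mul_add, Matrix.mul_sub, trace_add, trace_sub, trace_neg, trace_smul, smul_eq_mul]
  rw [trace_mul_comm (vecMulVec n n * Q), trace_mul_cycle' P, Matrix.mul_assoc Q]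
  ring

theorem Hn_ker_and_range (ψ₁ ψ₂ : ℝ) (n : Fin 3 → ℝ) (hn : ∑ i, n i ^ 2 = 1) :
    (∀ p : Fin 3 → ℝ, (∑ i, p i * n i = 0) →
      Hn ψ₁ ψ₂ n (vecMulVec n p + vecMulVec p n) = 0) ∧
    (∀ Q : Matrix (Fin 3) (Fin 3) ℝ, Q.IsSymm → Q.trace = 0 →
      ∀ p : Fin 3 → ℝ, (∑ i, p i * n i = 0) →
        frob (Hn ψ₁ ψ₂ n Q) (vecMulVec n p + vecMulVec p n) = 0) := by
  replace hn : n ⬝ᵥ n = 1 := by simpa [dotProduct, sq] using hn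
  refine ⟨fun p hp => ?_, fun Q _ _ p hp => ?_⟩
  all_goals replace hp : p ⬝ᵥ n = 0 := hp
  · have hfrob : frob (vecMulVec n n) (vecMulVec n p + vecMulVec p n) = 0 := by
      rw [frob_eq_trace_mul_transpose, transpose_vecMulVec_add_vecMulVec,
        vecMulVec_self_mul_vecMulVec_add hn hp, trace_vecMulVec, dotProduct_comm, hp]
    rw [Hn, hfrob, vecMulVec_self_mul_vecMulVec_add hn hp, vecMulVec_add_mul_vecMulVec_self hn hp]
    simp
  · rw [frob_eq_trace_mul_transpose, transpose_vecMulVec_add_vecMulVec, trace_Hn_mul,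
      vecMulVec_self_mul_vecMulVec_add hn hp, vecMulVec_add_mul_vecMulVec_self hn hp,
      trace_vecMulVec_add_vecMulVec hp, trace_vecMulVec, dotProduct_comm, hp]
    simp
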